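/- Let (x,y,s) ∈ N₂(θ) with θ = β = 0.1, δ = 0.3, σ = 1 - β/√n, n ≥ 2, μ = xᵀs/n > 0. Suppose (Δx,Δy,Δs) solves the inexact Newton system with ‖r‖₂ ≤ δ‖ξ‖₂, ξ = σμe - XSe, and ΔxᵀΔs ≥ 0. Then for every α ∈ (0,1], the point (x(α), s(α)) = (x + αΔx, s + αΔs) satisfies ‖X(α)S(α)e - μ(α)e‖₂ ≤ θ·μ(α), where μ(α) = x(α)ᵀs(α)/n. -/

import Mathlib

/-!
After the step, `xⱼ(α)sⱼ(α) = (1 - α)xⱼsⱼ + ασμ + αrⱼ + α²ΔxⱼΔsⱼ`, so the deviation of the new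
products from their mean (bars denoting means) is `(1 - α)(XSe - μe) + α(r - r̄e) + α²(ΔXΔSe - p̄e)`. The first piece is
at most `0.1μ`; the second at most `‖r‖ ≤ 0.3‖ξ‖`, where `‖ξ‖² = 0.01μ² + ‖XSe - μe‖² ≤ 0.02μ²`;
the third at most `‖ξ + r‖² / (2 minⱼ xⱼsⱼ)` with `minⱼ xⱼsⱼ ≥ 0.9μ`. The new mean is at least
`(1 - 0.1α)μ - α‖r‖`, and the constants leave ample room.
-/

open Finset

section

variable {ι : Type*} [Fintype ι]

theorem sqrt_sum_sq_add_le (f g : ι → ℝ) :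
    √(∑ j, (f j + g j) ^ 2) ≤ √(∑ j, f j ^ 2) + √(∑ j, g j ^ 2) := by
  simpa [EuclideanSpace.norm_eq, sq_abs] using
    norm_add_le (WithLp.toLp 2 f : EuclideanSpace ℝ ι) (WithLp.toLp 2 g)

theorem sqrt_sum_sq_mul_left (c : ℝ) (f : ι → ℝ) :
    √(∑ j, (c * f j) ^ 2) = |c| * √(∑ j, f j ^ 2) := by
  simp_rw [mul_pow, ← mul_sum, Real.sqrt_mul (sq_nonneg c), Real.sqrt_sq_eq_abs]

theorem abs_le_sqrt_sum_sq (f : ι → ℝ) (i : ι) : |f i| ≤ √(∑ j, f j ^ 2) :=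
  Real.abs_le_sqrt (single_le_sum (fun j _ ↦ sq_nonneg (f j)) (mem_univ i))

theorem sqrt_sum_sq_le_sum_abs (f : ι → ℝ) : √(∑ j, f j ^ 2) ≤ ∑ j, |f j| := by
  refine Real.sqrt_le_iff.mpr ⟨sum_nonneg fun j _ ↦ abs_nonneg _, ?_⟩
  simpa only [sq_abs] using sum_sq_le_sq_sum_of_nonneg (s := univ) fun j _ ↦ abs_nonneg (f j)

theorem sum_sq_sub_mean_le (f : ι → ℝ) :
    ∑ j, (f j - (∑ i, f i) / Fintype.card ι) ^ 2 ≤ ∑ j, f j ^ 2 := by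
  rcases isEmpty_or_nonempty ι with hι | hι
  · simp
  have hcard : (0 : ℝ) < Fintype.card ι := by exact_mod_cast Fintype.card_pos
  have hexpand : ∑ j, (f j - (∑ i, f i) / Fintype.card ι) ^ 2
      = ∑ j, f j ^ 2 - (∑ i, f i) ^ 2 / Fintype.card ι := by
    simp only [sub_sq, sum_add_distrib, sum_sub_distrib, ← sum_mul, ← mul_sum, sum_const,
      card_univ, nsmul_eq_mul]
    field_simp
    ring
  rw [hexpand]
  linarith [div_nonneg (sq_nonneg (∑ i, f i)) hcard.le]

theorem abs_mean_le_sqrt_sum_sq (f : ι → ℝ) :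
    |(∑ j, f j) / Fintype.card ι| ≤ √(∑ j, f j ^ 2) := by
  rcases isEmpty_or_nonempty ι with hι | hι
  · simp
  have hcard : (1 : ℝ) ≤ Fintype.card ι := by exact_mod_cast Fintype.card_pos
  refine Real.abs_le_sqrt ?_
  calc ((∑ j, f j) / Fintype.card ι) ^ 2
      = (∑ j, f j) ^ 2 / Fintype.card ι / Fintype.card ι := by ring
    _ ≤ (Fintype.card ι * ∑ j, f j ^ 2) / Fintype.card ι / 1 := by
        gcongr
        simpa using sq_sum_le_card_mul_sum_sq (s := univ) (f := f)
    _ = ∑ j, f j ^ 2 := by field_simp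

theorem sum_sq_sub_of_sum_eq_zero (c : ℝ) (g : ι → ℝ) (hg : ∑ j, g j = 0) :
    ∑ j, (c - g j) ^ 2 = Fintype.card ι * c ^ 2 + ∑ j, g j ^ 2 := by
  simp only [sub_sq, sum_add_distrib, sum_sub_distrib, ← mul_sum, hg, sum_const, card_univ,
    nsmul_eq_mul]
  ring

theorem sum_sq_sigma_mul_mean_sub (w : ι → ℝ) (μ θ σ : ℝ) (hμ : μ = (∑ j, w j) / Fintype.card ι)
    (hσ : σ = 1 - θ / √(Fintype.card ι)) :
    ∑ j, (σ * μ - w j) ^ 2 = θ ^ 2 * μ ^ 2 + ∑ j, (w j - μ) ^ 2 := by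
  rcases isEmpty_or_nonempty ι with hι | hι
  · simp [hμ]
  have hcard : (0 : ℝ) < Fintype.card ι := by exact_mod_cast Fintype.card_pos
  have hsum : ∑ j, (w j - μ) = 0 := by
    rw [sum_sub_distrib, sum_const, card_univ, nsmul_eq_mul, hμ]
    field_simp
    ring
  have hshift : Fintype.card ι * ((σ - 1) * μ) ^ 2 = θ ^ 2 * μ ^ 2 := by
    have hsqrt : √(Fintype.card ι : ℝ) ^ 2 = Fintype.card ι := Real.sq_sqrt hcard.le
    rw [hσ, show ((1 - θ / √(Fintype.card ι : ℝ) - 1) * μ) ^ 2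
      = θ ^ 2 * μ ^ 2 / √(Fintype.card ι : ℝ) ^ 2 by ring, hsqrt]
    field_simp
  have hsplit : ∀ j, σ * μ - w j = (σ - 1) * μ - (w j - μ) := fun j ↦ by ring
  simp_rw [hsplit]
  rw [sum_sq_sub_of_sum_eq_zero _ _ hsum, hshift]

theorem one_sub_mul_le_of_sqrt_sum_sq_sub_le {w : ι → ℝ} {μ θ : ℝ}
    (hw : √(∑ j, (w j - μ) ^ 2) ≤ θ * μ) (j : ι) : (1 - θ) * μ ≤ w j := by
  linarith [neg_abs_le (w j - μ), abs_le_sqrt_sum_sq (fun i ↦ w i - μ) j]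

theorem sqrt_sum_sq_mul_le_of_cross_eq {x s dx ds t : ι → ℝ} {m : ℝ} (hm : 0 < m)
    (hxs : ∀ j, m ≤ x j * s j) (ht : ∀ j, s j * dx j + x j * ds j = t j)
    (hsum : 0 ≤ ∑ j, dx j * ds j) :
    √(∑ j, (dx j * ds j) ^ 2) ≤ (∑ j, t j ^ 2) / (2 * m) := by
  -- `4 xⱼsⱼ · dxⱼdsⱼ ≤ tⱼ²` bounds the positive products; `∑ dxⱼdsⱼ ≥ 0` pays for the negative ones.
  have habs : ∀ j, |dx j * ds j| ≤ t j ^ 2 / (2 * m) - dx j * ds j := by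
    intro j
    have hcross : 4 * (x j * s j) * (dx j * ds j) ≤ t j ^ 2 := by
      rw [← ht j]; nlinarith [sq_nonneg (s j * dx j - x j * ds j)]
    rcases le_or_gt 0 (dx j * ds j) with hp | hp
    · rw [abs_of_nonneg hp, le_sub_iff_add_le, le_div_iff₀ (by positivity)]
      nlinarith [mul_le_mul_of_nonneg_right (hxs j) hp]
    · rw [abs_of_neg hp]
      linarith [div_nonneg (sq_nonneg (t j)) (by positivity : (0 : ℝ) ≤ 2 * m)]
  calc √(∑ j, (dx j * ds j) ^ 2) ≤ ∑ j, |dx j * ds j| := sqrt_sum_sq_le_sum_abs _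
    _ ≤ ∑ j, (t j ^ 2 / (2 * m) - dx j * ds j) := sum_le_sum fun j _ ↦ habs j
    _ = (∑ j, t j ^ 2) / (2 * m) - ∑ j, dx j * ds j := by rw [sum_sub_distrib, sum_div]
    _ ≤ (∑ j, t j ^ 2) / (2 * m) := by linarith

theorem sqrt_sum_sq_mul_le_of_inexact_newton {x s dx ds ξ r : ι → ℝ} {μ θ δ : ℝ}
    (hθ : θ < 1) (hμ : 0 < μ) (hcentral : √(∑ j, (x j * s j - μ) ^ 2) ≤ θ * μ)
    (hnewton : ∀ j, s j * dx j + x j * ds j = ξ j + r j)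
    (hr : √(∑ j, r j ^ 2) ≤ δ * √(∑ j, ξ j ^ 2)) (hdxds : 0 ≤ ∑ j, dx j * ds j) :
    √(∑ j, (dx j * ds j) ^ 2) ≤ (1 + δ) ^ 2 * (∑ j, ξ j ^ 2) / (2 * ((1 - θ) * μ)) := by
  have ht : √(∑ j, (ξ j + r j) ^ 2) ≤ (1 + δ) * √(∑ j, ξ j ^ 2) := by
    linarith [sqrt_sum_sq_add_le ξ r]
  have ht_sq : ∑ j, (ξ j + r j) ^ 2 ≤ (1 + δ) ^ 2 * ∑ j, ξ j ^ 2 := by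
    rw [← Real.sq_sqrt (sum_nonneg fun j _ ↦ sq_nonneg (ξ j)), ← mul_pow]
    exact (Real.sqrt_le_iff.mp ht).2
  refine (sqrt_sum_sq_mul_le_of_cross_eq (by nlinarith) (one_sub_mul_le_of_sqrt_sum_sq_sub_le hcentral)
    hnewton hdxds).trans ?_
  gcongr

section Step

variable [Nonempty ι] {v w r p : ι → ℝ} {α c μ : ℝ}

theorem mean_newton_step (hv : ∀ j, v j = (1 - α) * w j + α * c + α * r j + α ^ 2 * p j)
    (hμ : μ = (∑ j, w j) / Fintype.card ι) :
    (∑ j, v j) / Fintype.card ι = (1 - α) * μ + α * c + α * ((∑ j, r j) / Fintype.card ι)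
      + α ^ 2 * ((∑ j, p j) / Fintype.card ι) := by
  have hcard : (Fintype.card ι : ℝ) ≠ 0 := by exact_mod_cast Fintype.card_ne_zero
  simp only [hv, hμ, sum_add_distrib, ← mul_sum, sum_const, card_univ, nsmul_eq_mul]
  field_simp

theorem sqrt_sum_sq_sub_mean_newton_step_le (hα0 : 0 ≤ α) (hα1 : α ≤ 1)
    (hv : ∀ j, v j = (1 - α) * w j + α * c + α * r j + α ^ 2 * p j)
    (hμ : μ = (∑ j, w j) / Fintype.card ι) :
    √(∑ j, (v j - (∑ i, v i) / Fintype.card ι) ^ 2)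
      ≤ (1 - α) * √(∑ j, (w j - μ) ^ 2) + α * √(∑ j, r j ^ 2) + α ^ 2 * √(∑ j, p j ^ 2) := by
  have hdev : ∀ j, v j - (∑ i, v i) / Fintype.card ι
      = (1 - α) * (w j - μ) + α * (r j - (∑ i, r i) / Fintype.card ι)
        + α ^ 2 * (p j - (∑ i, p i) / Fintype.card ι) := fun j ↦ by
    rw [mean_newton_step hv hμ, hv j]; ring
  simp_rw [hdev]
  set r₀ : ι → ℝ := fun j ↦ r j - (∑ i, r i) / Fintype.card ι
  set p₀ : ι → ℝ := fun j ↦ p j - (∑ i, p i) / Fintype.card ι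
  calc _ ≤ √(∑ j, ((1 - α) * (w j - μ)) ^ 2) + √(∑ j, (α * r₀ j) ^ 2)
        + √(∑ j, (α ^ 2 * p₀ j) ^ 2) := by
        have h₁ := sqrt_sum_sq_add_le (fun j ↦ (1 - α) * (w j - μ) + α * r₀ j)
          (fun j ↦ α ^ 2 * p₀ j)
        have h₂ := sqrt_sum_sq_add_le (fun j ↦ (1 - α) * (w j - μ)) (fun j ↦ α * r₀ j)
        linarith
    _ ≤ (1 - α) * √(∑ j, (w j - μ) ^ 2) + α * √(∑ j, r j ^ 2) + α ^ 2 * √(∑ j, p j ^ 2) := by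
        simp only [sqrt_sum_sq_mul_left, abs_of_nonneg hα0, abs_of_nonneg (sub_nonneg.2 hα1),
          abs_of_nonneg (sq_nonneg α)]
        have hr₀ : √(∑ j, r₀ j ^ 2) ≤ √(∑ j, r j ^ 2) := Real.sqrt_le_sqrt (sum_sq_sub_mean_le r)
        have hp₀ : √(∑ j, p₀ j ^ 2) ≤ √(∑ j, p j ^ 2) := Real.sqrt_le_sqrt (sum_sq_sub_mean_le p)
        gcongr

end Step

end

theorem inexact_newton_step_stays_in_N2_general
    {n : ℕ}
    (x s dx ds ξ r : Fin n → ℝ) (μ σ : ℝ)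
    (hμ : μ = (∑ j, x j * s j) / n) (hμpos : 0 < μ)
    (hσ : σ = 1 - 0.1 / Real.sqrt n)
    (hN2 : Real.sqrt (∑ j, (x j * s j - μ) ^ 2) ≤ 0.1 * μ)
    (hξ : ∀ j, ξ j = σ * μ - x j * s j)
    (h3 : ∀ j, s j * dx j + x j * ds j = ξ j + r j)
    (hr : Real.sqrt (∑ j, (r j) ^ 2) ≤ 0.3 * Real.sqrt (∑ j, (ξ j) ^ 2))
    (hdxds : 0 ≤ ∑ j, dx j * ds j) :
    ∀ α : ℝ, 0 < α → α ≤ 1 →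
      Real.sqrt (∑ j, ((x j + α * dx j) * (s j + α * ds j)
          - (∑ i, (x i + α * dx i) * (s i + α * ds i)) / n) ^ 2)
        ≤ 0.1 * ((∑ i, (x i + α * dx i) * (s i + α * ds i)) / n) := by
  intro α hα hα1
  -- `μ > 0` rules out `n = 0`, where `μ = 0 / 0 = 0`.
  have hn : 0 < n := Nat.pos_of_ne_zero <| by rintro rfl; simp at hμ; linarith
  have : Nonempty (Fin n) := ⟨⟨0, hn⟩⟩
  have hcard : (n : ℝ) = Fintype.card (Fin n) := by rw [Fintype.card_fin]
  rw [hcard] at hμ hσ ⊢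
  have hξ_sq : ∑ j, ξ j ^ 2 ≤ 0.02 * μ ^ 2 := by
    have := sum_sq_sigma_mul_mean_sub (fun j ↦ x j * s j) μ 0.1 σ hμ hσ
    simp only [← hξ] at this
    nlinarith [(Real.sqrt_le_iff.mp hN2).2]
  have hξ_norm : √(∑ j, ξ j ^ 2) ≤ 0.1415 * μ :=
    Real.sqrt_le_iff.mpr ⟨by positivity, by nlinarith⟩
  have hr_norm : √(∑ j, r j ^ 2) ≤ 0.0425 * μ := by linarith
  have hp_norm : √(∑ j, (dx j * ds j) ^ 2) ≤ 0.019 * μ :=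
    (sqrt_sum_sq_mul_le_of_inexact_newton (by norm_num) hμpos hN2 h3 hr hdxds).trans <| by
      rw [div_le_iff₀ (by positivity)]; nlinarith
  have hσ_ge : 0.9 ≤ σ := by
    have : 1 ≤ √(Fintype.card (Fin n) : ℝ) := Real.one_le_sqrt.mpr (by simp; omega)
    rw [hσ]; linarith [div_le_self (by norm_num : (0 : ℝ) ≤ 0.1) this]
  have hv : ∀ j, (x j + α * dx j) * (s j + α * ds j)
      = (1 - α) * (x j * s j) + α * (σ * μ) + α * r j + α ^ 2 * (dx j * ds j) := fun j ↦ by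
    linear_combination α * h3 j + α * hξ j
  refine (sqrt_sum_sq_sub_mean_newton_step_le hα.le hα1 hv hμ).trans ?_
  rw [mean_newton_step hv hμ]
  have hr_mean : -(0.0425 * μ) ≤ (∑ j, r j) / Fintype.card (Fin n) := by
    linarith [neg_abs_le ((∑ j, r j) / Fintype.card (Fin n)), abs_mean_le_sqrt_sum_sq r]
  have hp_mean : 0 ≤ (∑ j, dx j * ds j) / Fintype.card (Fin n) := by positivity
  have hα_sq : α ^ 2 ≤ α := by nlinarith
  linarith [mul_le_mul_of_nonneg_left hN2 (sub_nonneg.2 hα1),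
    mul_le_mul_of_nonneg_left hr_norm hα.le, mul_le_mul_of_nonneg_left hp_norm (sq_nonneg α),
    mul_le_mul_of_nonneg_right hα_sq (by positivity : (0 : ℝ) ≤ 0.019 * μ),
    mul_le_mul_of_nonneg_left (mul_le_mul_of_nonneg_right hσ_ge hμpos.le) hα.le,
    mul_le_mul_of_nonneg_left hr_mean hα.le, mul_nonneg (sq_nonneg α) hp_mean, mul_pos hα hμpos]

/-- Lemma 3.2: with θ = β = 0.1 and δ = 0.3, any step α ∈ (0,1] in the inexact
Newton direction keeps the iterate in the N₂(θ) neighbourhood. -/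
theorem inexact_newton_step_stays_in_N2
    {n : ℕ} (hn : 2 ≤ n)
    (x s dx ds ξ r : Fin n → ℝ) (μ σ : ℝ)
    (hx : ∀ j, 0 < x j) (hs : ∀ j, 0 < s j)
    (hμ : μ = (∑ j, x j * s j) / n) (hμpos : 0 < μ)
    (hσ : σ = 1 - 0.1 / Real.sqrt n)
    (hN2 : Real.sqrt (∑ j, (x j * s j - μ) ^ 2) ≤ 0.1 * μ)
    (hξ : ∀ j, ξ j = σ * μ - x j * s j)
    (h3 : ∀ j, s j * dx j + x j * ds j = ξ j + r j)
    (hr : Real.sqrt (∑ j, (r j) ^ 2) ≤ 0.3 * Real.sqrt (∑ j, (ξ j) ^ 2))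
    (hdxds : 0 ≤ ∑ j, dx j * ds j) :
    ∀ α : ℝ, 0 < α → α ≤ 1 →
      Real.sqrt (∑ j, ((x j + α * dx j) * (s j + α * ds j)
          - (∑ i, (x i + α * dx i) * (s i + α * ds i)) / n) ^ 2)
        ≤ 0.1 * ((∑ i, (x i + α * dx i) * (s i + α * ds i)) / n) :=
  inexact_newton_step_stays_in_N2_general x s dx ds ξ r μ σ hμ hμpos hσ hN2 hξ h3 hr hdxds
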